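/- arXiv:2201.10537 — 5 statements merged into one kernel-verified Lean document; each statement's English description precedes it below -/
import Mathlib

section
/- Let V be a finite vertex type and G a simple graph on V which is a tree (i.e. G is connected and acyclic). If f : G ≃g G is a graph automorphism of G such that f fixes every vertex of degree at most 1 (in particular every univalent vertex/leaf), then f is the identity automorphism. Consequently, any two automorphisms of a finite tree that agree on all vertices of degree at most 1 are equal. -/
/-!
Every vertex `v` of a finite forest lies on a path joining two vertices of degree at most one:
extend the trivial path at `v` greedily in one direction, then the result in the other, which
is possible as long as the current end has degree at least two, because in an acyclic graph
the only neighbour of a path's end lying on the path is its penultimate vertex. An automorphism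
fixing both ends maps this path to a path with the same ends, hence to itself by uniqueness of
paths, so it fixes `v`.
-/

open SimpleGraph Walk

namespace SimpleGraph.IsAcyclic

variable {V : Type*} {G : SimpleGraph V}

theorem exists_adj_notMem_support_of_one_lt_degree (hG : G.IsAcyclic) {u v : V}
    {p : G.Walk u v} (hp : p.IsPath) [Fintype (G.neighborSet v)] (hv : 1 < G.degree v) :
    ∃ w, G.Adj v w ∧ w ∉ p.support := by
  rw [← card_neighborFinset_eq_degree, Finset.one_lt_card] at hv
  obtain ⟨w, hw, w', hw', hne⟩ := hv
  rw [mem_neighborFinset] at hw hw'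
  by_contra! h
  exact hne <| (hG.eq_penultimate_of_adj_end hp hw (h w hw)).trans
    (hG.eq_penultimate_of_adj_end hp hw' (h w' hw')).symm

theorem exists_isPath_extension_degree_le_one [Fintype V] [DecidableRel G.Adj]
    (hG : G.IsAcyclic) {u v : V} (p : G.Walk u v) (hp : p.IsPath) :
    ∃ (w : V) (q : G.Walk u w), q.IsPath ∧ G.degree w ≤ 1 ∧ p.support ⊆ q.support := by
  by_cases hv : G.degree v ≤ 1
  · exact ⟨v, p, hp, hv, List.Subset.refl _⟩
  obtain ⟨w, hvw, hw⟩ := hG.exists_adj_notMem_support_of_one_lt_degree hp (not_le.mp hv)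
  have hp' := hp.concat hw hvw
  obtain ⟨x, q, hq, hx, hsub⟩ := hG.exists_isPath_extension_degree_le_one _ hp'
  exact ⟨x, q, hq, hx, List.Subset.trans (p.support_subset_support_concat hvw) hsub⟩
termination_by Fintype.card V - p.length
decreasing_by
  have := hp'.length_lt
  rw [length_concat] at this ⊢
  omega

theorem exists_isPath_degree_le_one_mem_support [Fintype V] [DecidableRel G.Adj]
    (hG : G.IsAcyclic) (v : V) :
    ∃ (a b : V) (p : G.Walk a b), p.IsPath ∧ G.degree a ≤ 1 ∧ G.degree b ≤ 1 ∧
      v ∈ p.support := by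
  obtain ⟨a, q, hq, ha, -⟩ := hG.exists_isPath_extension_degree_le_one _ (IsPath.nil (u := v))
  obtain ⟨b, p, hp, hb, hsub⟩ := hG.exists_isPath_extension_degree_le_one _ hq.reverse
  exact ⟨a, b, p, hp, ha, hb, hsub (by simp)⟩

theorem apply_eq_of_mem_support (hG : G.IsAcyclic) (f : G ≃g G) {a b : V}
    (ha : f a = a) (hb : f b = b) {p : G.Walk a b} (hp : p.IsPath) {v : V}
    (hv : v ∈ p.support) : f v = v := by
  have hfp : ((p.map f.toHom).copy ha hb).IsPath := by
    rw [isPath_copy]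
    exact hp.map f.injective
  have hmap : (p.map f.toHom).copy ha hb = p :=
    congrArg Subtype.val ((hG.subsingleton_path a b).elim ⟨_, hfp⟩ ⟨p, hp⟩)
  obtain ⟨i, rfl, -⟩ := mem_support_iff_exists_getVert.mp hv
  simpa [getVert_map] using congrArg (·.getVert i) hmap

end SimpleGraph.IsAcyclic

/-- A tree automorphism fixing all vertices of degree at most one (in particular all
univalent vertices/leaves) is the identity; consequently any two automorphisms of a
finite tree agreeing on all vertices of degree at most one are equal. -/
theorem tree_automorphism_fixing_leaves_is_id
    {V : Type*} [Fintype V] (G : SimpleGraph V) [DecidableRel G.Adj]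
    (hT : G.IsTree) :
    (∀ f : G ≃g G, (∀ v : V, G.degree v ≤ 1 → f v = v) → ∀ v : V, f v = v) ∧
    (∀ f g : G ≃g G, (∀ v : V, G.degree v ≤ 1 → f v = g v) → f = g) := by
  have fixes_all : ∀ f : G ≃g G, (∀ v : V, G.degree v ≤ 1 → f v = v) → ∀ v : V, f v = v := by
    intro f hf v
    obtain ⟨a, b, p, hp, ha, hb, hv⟩ := hT.isAcyclic.exists_isPath_degree_le_one_mem_support v
    exact hT.isAcyclic.apply_eq_of_mem_support f (hf a ha) (hf b hb) hp hv
  refine ⟨fixes_all, fun f g hfg => RelIso.ext fun v => ?_⟩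
  have := fixes_all (f.trans g.symm) (fun w hw => by simp [hfg w hw]) v
  simpa [RelIso.symm_apply_eq] using this
end

section
/- Let G be a connected simple graph on a finite vertex type. Then any two spanning trees of G are connected by a finite sequence of mutations: there is a chain of spanning trees from the first to the second in which consecutive trees are adjacent, where two spanning trees are adjacent if they share all but one edge (equivalently, each of the two edge-set differences T₁.edgeSet \ T₂.edgeSet and T₂.edgeSet \ T₁.edgeSet contains exactly one edge). In other words, the spanning tree graph 𝒯(G) of a connected graph G is connected. -/
/-!
If `f = s(u, v)` is an edge of `T₂` missing from `T`, then `T + f` has a unique cycle, namely `f`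
together with the path from `u` to `v` in `T`. This path cannot lie inside the acyclic `T₂`, so it
contains an edge `e ∉ T₂`; then `T + f - e` is connected with as many edges as `T`, hence a tree,
and it has one more edge in common with `T₂` than `T` has.
-/

/-- Two spanning trees of a graph are *adjacent* (related by a mutation) if they share
all but one edge, i.e. each of the two edge-set differences contains exactly one edge. -/
def SpanningTreeAdjacent {V : Type*} {G : SimpleGraph V} (T₁ T₂ : G.Subgraph) : Prop :=
  (T₁.edgeSet \ T₂.edgeSet).ncard = 1 ∧ (T₂.edgeSet \ T₁.edgeSet).ncard = 1

namespace SimpleGraph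

variable {V : Type*} {T T' : SimpleGraph V} {u v : V} {e : Sym2 V}

lemma edgeSet_sup_edge_deleteEdges (hne : u ≠ v) :
    ((T ⊔ edge u v).deleteEdges {e}).edgeSet = insert s(u, v) T.edgeSet \ {e} := by
  rw [edgeSet_deleteEdges, edgeSet_sup, edgeSet_edge_of_ne hne, Set.union_comm,
    Set.singleton_union]

lemma IsTree.isTree_sup_edge_deleteEdges [Finite V] (hT : T.IsTree) (huv : ¬T.Adj u v)
    (hne : u ≠ v) {p : T.Walk u v} (hp : p.IsPath) (he : e ∈ p.edges) :
    ((T ⊔ edge u v).deleteEdges {e}).IsTree := by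
  have hvu : (T ⊔ edge u v).Adj v u := Or.inr ((edge_adj ..).2 ⟨Or.inr ⟨rfl, rfl⟩, hne.symm⟩)
  have hc : (Walk.cons hvu (p.mapLe le_sup_left)).IsCycle := by
    rw [Walk.cons_isCycle_iff, Walk.edges_mapLe_eq_edges, Sym2.eq_swap]
    exact ⟨hp.mapLe _, fun h => huv (p.adj_of_mem_edges h)⟩
  have hnb : ¬(T ⊔ edge u v).IsBridge e := fun hb =>
    hb.notMem_edges_of_isCycle hc (by simp [he])
  have he' : e ∈ insert s(u, v) T.edgeSet := Or.inr (p.edges_subset_edgeSet he)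
  have huv' : s(u, v) ∉ T.edgeSet := huv
  induction e using Sym2.ind with | _ a b =>
  rw [isTree_iff_connected_and_card, Nat.card_coe_set_eq, edgeSet_sup_edge_deleteEdges hne,
    Set.ncard_sdiff_singleton_of_mem he', Set.ncard_insert_of_notMem huv', ← Nat.card_coe_set_eq,
    Nat.add_sub_cancel]
  exact ⟨(hT.connected.mono le_sup_left).connected_delete_edge_of_not_isBridge hnb,
    (isTree_iff_connected_and_card.1 hT).2⟩

lemma IsTree.exists_isTree_sup_edge_deleteEdges [Finite V] (hT : T.IsTree) (hT' : T'.IsAcyclic)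
    (huv : T'.Adj u v) (hnot : ¬T.Adj u v) :
    ∃ e ∈ T.edgeSet \ T'.edgeSet, ((T ⊔ edge u v).deleteEdges {e}).IsTree := by
  obtain ⟨p, hp, -⟩ := hT.existsUnique_path u v
  obtain ⟨e, hep, he⟩ : ∃ e ∈ p.edges, e ∉ T'.edgeSet := by
    by_contra! h
    -- every edge of an acyclic graph is a bridge, so the copy of `p` in `T'` uses `s(u, v)`
    have := isBridge_iff_forall_walk_mem_edges.1 (isAcyclic_iff_forall_isBridge.1 hT' huv)
      (p.transfer T' h)
    rw [Walk.edges_transfer] at this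
    exact hnot (p.adj_of_mem_edges this)
  exact ⟨e, ⟨p.edges_subset_edgeSet hep, he⟩, hT.isTree_sup_edge_deleteEdges hnot huv.ne hp hep⟩

lemma IsTree.eq_of_le (hT' : T'.IsTree) (hT : T.Connected) (h : T ≤ T') : T = T' :=
  (isTree_iff_minimal_connected.1 hT').eq_of_le hT h

end SimpleGraph

namespace SimpleGraph.Subgraph

variable {V : Type*} {G : SimpleGraph V} {T T' T₂ : G.Subgraph} {e f : Sym2 V}

lemma spanningTreeAdjacent_of_edgeSet_eq_insert_sdiff (he : e ∈ T.edgeSet) (hf : f ∉ T.edgeSet)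
    (h : T'.edgeSet = insert f T.edgeSet \ {e}) : SpanningTreeAdjacent T T' := by
  have hef : e ≠ f := by rintro rfl; exact hf he
  have h₁ : T.edgeSet \ T'.edgeSet = {e} := by rw [h]; ext; grind
  have h₂ : T'.edgeSet \ T.edgeSet = {f} := by rw [h]; ext; grind
  simp [SpanningTreeAdjacent, h₁, h₂]

lemma eq_of_edgeSet_subset (hT : T.IsSpanning) (hT₂ : T₂.IsSpanning) (ht : T.spanningCoe.IsTree)
    (hc₂ : T₂.spanningCoe.Connected) (h : T₂.edgeSet ⊆ T.edgeSet) : T₂ = T := by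
  refine verts_spanningCoe_injective (Prod.ext ?_ (ht.eq_of_le hc₂ ?_))
  · simp only [isSpanning_iff.1 hT, isSpanning_iff.1 hT₂]
  · rwa [← edgeSet_subset_edgeSet, edgeSet_spanningCoe, edgeSet_spanningCoe]

lemma exists_spanningTreeAdjacent [Finite V] (ht : T.spanningCoe.IsTree)
    (ht₂ : T₂.spanningCoe.IsAcyclic) (hf : f ∈ T₂.edgeSet \ T.edgeSet) :
    ∃ T' : G.Subgraph, T'.IsSpanning ∧ T'.spanningCoe.IsTree ∧ SpanningTreeAdjacent T T' ∧
      T₂.edgeSet \ T'.edgeSet = (T₂.edgeSet \ T.edgeSet) \ {f} := by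
  induction f using Sym2.ind with | _ u v =>
  obtain ⟨hf₂, hf⟩ := hf
  have huv : T₂.Adj u v := hf₂
  obtain ⟨e, ⟨he, he₂⟩, htree⟩ := ht.exists_isTree_sup_edge_deleteEdges ht₂ huv hf
  rw [edgeSet_spanningCoe] at he he₂
  have hle : (T.spanningCoe ⊔ edge u v).deleteEdges {e} ≤ G :=
    (SimpleGraph.deleteEdges_le _).trans
      (sup_le T.spanningCoe_le ((edge_le_iff _).2 (.inr (T₂.adj_sub huv))))
  have hE : (toSubgraph _ hle).edgeSet = insert s(u, v) T.edgeSet \ {e} := by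
    rw [← edgeSet_spanningCoe, ← edgeSet_spanningCoe T]
    exact edgeSet_sup_edge_deleteEdges huv.ne
  refine ⟨toSubgraph _ hle, toSubgraph.isSpanning _ hle, htree,
    spanningTreeAdjacent_of_edgeSet_eq_insert_sdiff he hf hE, ?_⟩
  rw [hE]; ext; grind

end SimpleGraph.Subgraph

open SimpleGraph Subgraph in
theorem spanning_tree_graph_connected_general
    {V : Type*} [Fintype V] (G : SimpleGraph V)
    (T₁ T₂ : G.Subgraph)
    (h₁s : T₁.IsSpanning) (h₁t : T₁.spanningCoe.IsTree)
    (h₂s : T₂.IsSpanning) (h₂t : T₂.spanningCoe.IsTree) :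
    Relation.ReflTransGen
      (fun S₁ S₂ : {T : G.Subgraph // T.IsSpanning ∧ T.spanningCoe.IsTree} =>
        SpanningTreeAdjacent S₁.1 S₂.1)
      ⟨T₁, h₁s, h₁t⟩ ⟨T₂, h₂s, h₂t⟩ := by
  induction hn : (T₂.edgeSet \ T₁.edgeSet).ncard generalizing T₁ with
  | zero =>
    have hsub : T₂.edgeSet ⊆ T₁.edgeSet := Set.sdiff_eq_empty.1 ((Set.ncard_eq_zero).1 hn)
    obtain rfl := eq_of_edgeSet_subset h₁s h₂s h₁t h₂t.connected hsub
    rfl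
  | succ n ih =>
    obtain ⟨f, hf⟩ := Set.nonempty_of_ncard_ne_zero (hn.trans_ne n.succ_ne_zero)
    obtain ⟨T', hs', ht', hadj, hdiff⟩ := exists_spanningTreeAdjacent h₁t h₂t.isAcyclic hf
    refine .head hadj (ih T' hs' ht' ?_)
    rw [hdiff, Set.ncard_sdiff_singleton_of_mem hf, hn, Nat.add_sub_cancel]

/-- The spanning tree graph of a connected finite graph is connected: any two spanning
trees are connected by a finite sequence of mutations through spanning trees. -/
theorem spanning_tree_graph_connected
    {V : Type*} [Fintype V] (G : SimpleGraph V) (hG : G.Connected)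
    (T₁ T₂ : G.Subgraph)
    (h₁s : T₁.IsSpanning) (h₁t : T₁.spanningCoe.IsTree)
    (h₂s : T₂.IsSpanning) (h₂t : T₂.spanningCoe.IsTree) :
    Relation.ReflTransGen
      (fun S₁ S₂ : {T : G.Subgraph // T.IsSpanning ∧ T.spanningCoe.IsTree} =>
        SpanningTreeAdjacent S₁.1 S₂.1)
      ⟨T₁, h₁s, h₁t⟩ ⟨T₂, h₂s, h₂t⟩ :=
  spanning_tree_graph_connected_general G T₁ T₂ h₁s h₁t h₂s h₂t
end

section
/- Letters outside a loop can be moved past it: for all lists A, B, C over L and every loop label t : β, the cyclic words A ++ [t⁺] ++ B ++ [t⁻] ++ C and A ++ C ++ [t⁺] ++ B ++ [t⁻] are mutation-equivalent, i.e. R (A ++ [t⁺] ++ B ++ [t⁻] ++ C) (A ++ C ++ [t⁺] ++ B ++ [t⁻]). -/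
/-- One-step moves on cyclic words over the letter type `α ⊕ β × Bool`
(`α` = outer letters, `β` = loop labels, `Sum.inr (t, true)` = `t⁺`,
`Sum.inr (t, false)` = `t⁻`): rotation and the basic mutation. -/
def MutStep (α β : Type*) : List (α ⊕ β × Bool) → List (α ⊕ β × Bool) → Prop :=
  fun w₁ w₂ =>
    (∃ (x : α ⊕ β × Bool) (w : List (α ⊕ β × Bool)), w₁ = x :: w ∧ w₂ = w ++ [x]) ∨
    (∃ (t : β) (A B C D : List (α ⊕ β × Bool)),
      w₁ = A ++ [Sum.inr (t, true)] ++ B ++ C ++ [Sum.inr (t, false)] ++ D ∧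
      w₂ = D ++ [Sum.inr (t, true)] ++ C ++ B ++ [Sum.inr (t, false)] ++ A)

/-- Mutation equivalence of cyclic words: the smallest equivalence relation
(reflexive–symmetric–transitive closure) containing the one-step moves. -/
def MutEquiv (α β : Type*) : List (α ⊕ β × Bool) → List (α ⊕ β × Bool) → Prop :=
  Relation.EqvGen (MutStep α β)

namespace MutEquiv

variable {α β : Type*}

theorem equivalence : Equivalence (MutEquiv α β) :=
  Relation.EqvGen.is_equivalence _

theorem cons_rotate (x : α ⊕ β × Bool) (w : List (α ⊕ β × Bool)) :
    MutEquiv α β (x :: w) (w ++ [x]) :=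
  .rel _ _ (.inl ⟨x, w, rfl, rfl⟩)

theorem append_comm (u v : List (α ⊕ β × Bool)) : MutEquiv α β (u ++ v) (v ++ u) := by
  induction u generalizing v with
  | nil => simpa using equivalence.refl v
  | cons x u ih =>
    have h := equivalence.trans (cons_rotate x (u ++ v)) (by simpa using ih (v ++ [x]))
    simpa using h

theorem mutate (t : β) (A B C D : List (α ⊕ β × Bool)) :
    MutEquiv α β (A ++ [Sum.inr (t, true)] ++ B ++ C ++ [Sum.inr (t, false)] ++ D)
      (D ++ [Sum.inr (t, true)] ++ C ++ B ++ [Sum.inr (t, false)] ++ A) :=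
  .rel _ _ (.inr ⟨t, A, B, C, D, rfl, rfl⟩)

end MutEquiv

/-- Letters outside a loop can be moved past it:
`(A t⁺ B t⁻ C)` is mutation-equivalent to `(A C t⁺ B t⁻)`. -/
theorem mut_move_outside_loop {α β : Type*} (A B C : List (α ⊕ β × Bool)) (t : β) :
    MutEquiv α β
      (A ++ [Sum.inr (t, true)] ++ B ++ [Sum.inr (t, false)] ++ C)
      (A ++ C ++ [Sum.inr (t, true)] ++ B ++ [Sum.inr (t, false)]) := by
  have swap : MutEquiv α β (A ++ [Sum.inr (t, true)] ++ B ++ [Sum.inr (t, false)] ++ C)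
      (C ++ [Sum.inr (t, true)] ++ B ++ [Sum.inr (t, false)] ++ A) := by
    simpa using MutEquiv.mutate t A B [] C
  have rotate := MutEquiv.append_comm (C ++ [Sum.inr (t, true)] ++ B ++ [Sum.inr (t, false)]) A
  simpa using MutEquiv.equivalence.trans swap rotate
end

section
/- Isolation of an interleaved pair of loops: for all lists A, B, C, D, E over L and all loop labels s, t : β, the cyclic words A ++ [s⁺] ++ B ++ [t⁺] ++ C ++ [s⁻] ++ D ++ [t⁻] ++ E and A ++ D ++ C ++ B ++ E ++ [s⁺, t⁺, s⁻, t⁻] are mutation-equivalent, i.e. R (A ++ [s⁺] ++ B ++ [t⁺] ++ C ++ [s⁻] ++ D ++ [t⁻] ++ E) (A ++ D ++ C ++ B ++ E ++ [s⁺, t⁺, s⁻, t⁻]). -/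
/-! Read cyclically, a basic mutation at `t` fixes `t⁺` and `t⁻` and swaps the two halves of
each of the two arcs between them: `(t⁺ B C t⁻ D X) ~ (t⁺ C B t⁻ X D)`. Four such swaps,
alternately at `s` and at `t`, each preceded by a rotation, untangle the interleaved pair. -/

local infix:50 " ∼ " => MutEquiv _ _

namespace MutEquiv

variable {α β : Type*}

theorem refl (w : List (α ⊕ β × Bool)) : MutEquiv α β w w :=
  Relation.EqvGen.refl w

theorem trans {u v w : List (α ⊕ β × Bool)} (huv : MutEquiv α β u v)
    (hvw : MutEquiv α β v w) : MutEquiv α β u w :=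
  Relation.EqvGen.trans _ _ _ huv hvw

instance : Trans (MutEquiv α β) (MutEquiv α β) (MutEquiv α β) := ⟨trans⟩

theorem rotate_one (w : List (α ⊕ β × Bool)) : MutEquiv α β w (w.rotate 1) := by
  cases w with
  | nil => exact refl _
  | cons x w => exact Relation.EqvGen.rel _ _ (Or.inl ⟨x, w, rfl, by simp⟩)

theorem rotate (w : List (α ⊕ β × Bool)) (n : ℕ) : MutEquiv α β w (w.rotate n) := by
  induction n with
  | zero => simpa using refl w
  | succ n ih => simpa [List.rotate_rotate] using ih.trans (rotate_one (w.rotate n))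

theorem swap (t : β) (B C D X : List (α ⊕ β × Bool)) :
    MutEquiv α β (.inr (t, true) :: B ++ C ++ .inr (t, false) :: D ++ X)
      (.inr (t, true) :: C ++ B ++ .inr (t, false) :: X ++ D) := by
  have mutation : MutEquiv α β
      (X ++ [.inr (t, true)] ++ B ++ C ++ [.inr (t, false)] ++ D)
      (D ++ [.inr (t, true)] ++ C ++ B ++ [.inr (t, false)] ++ X) :=
    Relation.EqvGen.rel _ _ (Or.inr ⟨t, X, B, C, D, rfl, rfl⟩)
  calc _
    _ ∼ X ++ .inr (t, true) :: B ++ C ++ .inr (t, false) :: D := by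
        simpa using append_comm (.inr (t, true) :: B ++ C ++ .inr (t, false) :: D) X
    _ ∼ D ++ .inr (t, true) :: C ++ B ++ .inr (t, false) :: X := by simpa using mutation
    _ ∼ _ := by simpa using append_comm D (.inr (t, true) :: C ++ B ++ .inr (t, false) :: X)

end MutEquiv

/-- Isolation of an interleaved pair of loops:
`(A s⁺ B t⁺ C s⁻ D t⁻ E)` is mutation-equivalent to `(A D C B E s⁺ t⁺ s⁻ t⁻)`. -/
theorem mut_isolate_interleaved {α β : Type*}
    (A B C D E : List (α ⊕ β × Bool)) (s t : β) :
    MutEquiv α β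
      (A ++ [Sum.inr (s, true)] ++ B ++ [Sum.inr (t, true)] ++ C ++ [Sum.inr (s, false)]
        ++ D ++ [Sum.inr (t, false)] ++ E)
      (A ++ D ++ C ++ B ++ E ++
        [Sum.inr (s, true), Sum.inr (t, true), Sum.inr (s, false), Sum.inr (t, false)]) := by
  set sp : α ⊕ β × Bool := .inr (s, true)
  set sm : α ⊕ β × Bool := .inr (s, false)
  set tp : α ⊕ β × Bool := .inr (t, true)
  set tm : α ⊕ β × Bool := .inr (t, false)
  calc _
    _ = A ++ sp :: B ++ tp :: C ++ sm :: D ++ tm :: E := by simp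
    _ ∼ sp :: B ++ tp :: C ++ sm :: D ++ tm :: E ++ A := by
        simpa using MutEquiv.append_comm A (sp :: B ++ tp :: C ++ sm :: D ++ tm :: E)
    _ ∼ sp :: B ++ tp :: C ++ sm :: E ++ A ++ D ++ [tm] := by
        simpa using MutEquiv.swap s (B ++ tp :: C) [] (D ++ [tm]) (E ++ A)
    _ ∼ tp :: C ++ sm :: E ++ A ++ D ++ tm :: sp :: B := by
        simpa using MutEquiv.append_comm (sp :: B) (tp :: C ++ sm :: E ++ A ++ D ++ [tm])
    _ ∼ tp :: A ++ D ++ C ++ sm :: E ++ tm :: sp :: B := by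
        simpa using MutEquiv.swap t (C ++ sm :: E) (A ++ D) (sp :: B) []
    _ ∼ sp :: B ++ tp :: A ++ D ++ C ++ sm :: E ++ [tm] := by
        simpa using MutEquiv.append_comm (tp :: A ++ D ++ C ++ sm :: E ++ [tm]) (sp :: B)
    _ ∼ sp :: A ++ D ++ C ++ B ++ tp :: sm :: tm :: E := by
        simpa using MutEquiv.swap s (B ++ [tp]) (A ++ D ++ C) E [tm]
    _ ∼ tp :: sm :: tm :: E ++ sp :: A ++ D ++ C ++ B := by
        simpa using MutEquiv.append_comm (sp :: A ++ D ++ C ++ B) (tp :: sm :: tm :: E)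
    _ ∼ tp :: sm :: tm :: A ++ D ++ C ++ B ++ E ++ [sp] := by
        simpa using MutEquiv.swap t [sm] [] (E ++ [sp]) (A ++ D ++ C ++ B)
    _ ∼ A ++ D ++ C ++ B ++ E ++ [sp, tp, sm, tm] := by
        simpa using MutEquiv.append_comm [tp, sm, tm] (A ++ D ++ C ++ B ++ E ++ [sp])
end

section
/- Construction of a symmetric Frobenius algebra from correlation-function data: let k be a field, V a finite-dimensional k-vector space, B : V →ₗ[k] V →ₗ[k] k a nondegenerate symmetric bilinear form, ε : V →ₗ[k] k a linear functional, and T : V →ₗ[k] V →ₗ[k] V →ₗ[k] k a trilinear form that is cyclically invariant (T a b c = T b c a for all a, b, c). Fix a basis (vᵢ) of V and its B-dual basis (v'ᵢ), characterized by B (vᵢ) (v'ⱼ) = δᵢⱼ. Assume the two compatibility equations: (E2) for all a, c: ∑ᵢ ε (vᵢ) * T (v'ᵢ) a c = B a c; and (E3) for all a, b, c, d: ∑ᵢ T a b (vᵢ) * T (v'ᵢ) c d = ∑ᵢ T b c (vᵢ) * T (v'ᵢ) d a. Then there exist a unique bilinear multiplication μ : V →ₗ[k] V →ₗ[k] V and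 a unique element u : V such that (V, μ, u) is a unital associative k-algebra, B (μ a b) c = T a b c for all a, b, c, ε a = B u a for all a, and B a b = ε (μ a b) for all a, b; in particular ε (μ a b) = ε (μ b a), so (V, μ, u, ε) is a symmetric Frobenius algebra. If moreover T is invariant under all permutations of its three arguments, then μ is commutative and (V, μ, u, ε) is a commutative Frobenius algebra. -/
/-!
Since `B` is nondegenerate, an element of `V` is determined by its `B`-pairings, so `μ` and `u`
are forced by `B (μ a b) = T a b` and `B u = ε`; expanding in the dual basis, they are
`μ a b = ∑ i, T a b (vᵢ) • v'ᵢ` and `u = ∑ i, ε (vᵢ) • v'ᵢ`. The algebra axioms are then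
identities between pairings: (E2) says `T u a c = B a c`, which gives both unit laws and the
trace formula, and (E3) says `T (μ a b) c d = T (μ b c) d a`, which, by cyclicity of `T`, is
associativity.
-/

namespace Module.Basis

variable {R M ι : Type*} [CommSemiring R] [AddCommMonoid M] [Module R M] [Fintype ι]

noncomputable def rieszRep (v v' : Basis ι R M) : (M →ₗ[R] R) →ₗ[R] M :=
  ∑ i, (LinearMap.applyₗ (v i)).smulRight (v' i)

variable (v v' : Basis ι R M)

@[simp]
theorem rieszRep_apply (f : M →ₗ[R] R) : v.rieszRep v' f = ∑ i, f (v i) • v' i := by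
  simp [rieszRep]

theorem apply_rieszRep [DecidableEq ι] {B : M →ₗ[R] M →ₗ[R] R} (hBsymm : ∀ a b, B a b = B b a)
    (hdual : ∀ i j, B (v i) (v' j) = if i = j then 1 else 0) (f : M →ₗ[R] R) (x : M) :
    B (v.rieszRep v' f) x = f x := by
  suffices B.flip (v.rieszRep v' f) = f by rw [hBsymm]; exact LinearMap.congr_fun this x
  refine v.ext fun j => ?_
  simp [hdual]

end Module.Basis

section PairingAlgebra

variable {R M : Type*} [CommRing R] [AddCommGroup M] [Module R M] {B : M →ₗ[R] M →ₗ[R] R}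

theorem eq_of_forall_pairing_eq (hBnd : ∀ a, (∀ b, B a b = 0) → a = 0) {x y : M}
    (h : ∀ c, B x c = B y c) : x = y :=
  sub_eq_zero.mp <| hBnd _ fun c => by simp [h]

variable {T : M →ₗ[R] M →ₗ[R] M →ₗ[R] R} {μ : M →ₗ[R] M →ₗ[R] M} {u : M}

theorem one_mul_of_pairing (hBnd : ∀ a, (∀ b, B a b = 0) → a = 0)
    (hμ : ∀ a b c, B (μ a b) c = T a b c) (hTu : ∀ a b, T u a b = B a b) (a : M) :
    μ u a = a :=
  eq_of_forall_pairing_eq hBnd fun c => by rw [hμ, hTu]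

theorem mul_one_of_pairing (hBsymm : ∀ a b, B a b = B b a)
    (hBnd : ∀ a, (∀ b, B a b = 0) → a = 0) (hTcyc : ∀ a b c, T a b c = T b c a)
    (hμ : ∀ a b c, B (μ a b) c = T a b c) (hTu : ∀ a b, T u a b = B a b) (a : M) :
    μ a u = a :=
  eq_of_forall_pairing_eq hBnd fun c => by rw [hμ, hTcyc, hTu, hBsymm]

theorem mul_assoc_of_pairing (hBnd : ∀ a, (∀ b, B a b = 0) → a = 0)
    (hTcyc : ∀ a b c, T a b c = T b c a) (hμ : ∀ a b c, B (μ a b) c = T a b c)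
    (hTμ : ∀ a b c d, T (μ a b) c d = T (μ b c) d a) (a b c : M) :
    μ (μ a b) c = μ a (μ b c) :=
  eq_of_forall_pairing_eq hBnd fun d => by rw [hμ, hμ, hTcyc a, hTμ]

theorem mul_comm_of_pairing (hBnd : ∀ a, (∀ b, B a b = 0) → a = 0)
    (hμ : ∀ a b c, B (μ a b) c = T a b c) (hTsymm : ∀ a b c, T a b c = T b a c) (a b : M) :
    μ a b = μ b a :=
  eq_of_forall_pairing_eq hBnd fun c => by rw [hμ, hμ, hTsymm]

theorem trace_mul_of_pairing {ε : M →ₗ[R] R} (hBsymm : ∀ a b, B a b = B b a)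
    (hTcyc : ∀ a b c, T a b c = T b c a) (hμ : ∀ a b c, B (μ a b) c = T a b c)
    (hu : ∀ c, B u c = ε c) (hTu : ∀ a b, T u a b = B a b) (a b : M) :
    ε (μ a b) = B a b := by
  rw [← hu, hBsymm, hμ, hTcyc, hTcyc b, hTu]

end PairingAlgebra

theorem frobenius_from_correlators_general
    {k : Type*} [Field k] {V : Type*} [AddCommGroup V] [Module k V]
    (B : V →ₗ[k] V →ₗ[k] k)
    (hBsymm : ∀ a b : V, B a b = B b a)
    (hBnd : ∀ a : V, (∀ b : V, B a b = 0) → a = 0)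
    (ε : V →ₗ[k] k)
    (T : V →ₗ[k] V →ₗ[k] V →ₗ[k] k)
    (hTcyc : ∀ a b c : V, T a b c = T b c a)
    {ι : Type*} [Fintype ι] [DecidableEq ι]
    (v v' : Module.Basis ι k V)
    (hdual : ∀ i j : ι, B (v i) (v' j) = if i = j then 1 else 0)
    (hE2 : ∀ a c : V, ∑ i, ε (v i) * T (v' i) a c = B a c)
    (hE3 : ∀ a b c d : V,
      ∑ i, T a b (v i) * T (v' i) c d = ∑ i, T b c (v i) * T (v' i) d a) :
    (∃! μu : (V →ₗ[k] V →ₗ[k] V) × V,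
      (∀ a b c : V, μu.1 (μu.1 a b) c = μu.1 a (μu.1 b c)) ∧
      (∀ a : V, μu.1 μu.2 a = a) ∧
      (∀ a : V, μu.1 a μu.2 = a) ∧
      (∀ a b c : V, B (μu.1 a b) c = T a b c) ∧
      (∀ a : V, ε a = B μu.2 a) ∧
      (∀ a b : V, B a b = ε (μu.1 a b))) ∧
    (∀ μ : V →ₗ[k] V →ₗ[k] V, (∀ a b c : V, B (μ a b) c = T a b c) →
      ∀ a b : V, ε (μ a b) = ε (μ b a)) ∧
    ((∀ a b c : V, T a b c = T b a c) →
      ∀ μ : V →ₗ[k] V →ₗ[k] V, (∀ a b c : V, B (μ a b) c = T a b c) →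
        ∀ a b : V, μ a b = μ b a) := by
  have hrep := v.apply_rieszRep v' hBsymm hdual
  set μ := T.compr₂ (v.rieszRep v')
  set u := v.rieszRep v' ε
  have hμ : ∀ a b c, B (μ a b) c = T a b c := fun a b => hrep (T a b)
  have hu : ∀ c, B u c = ε c := hrep ε
  have hTu : ∀ a b, T u a b = B a b := by simpa [u] using hE2
  have hTμ : ∀ a b c d, T (μ a b) c d = T (μ b c) d a := by simpa [μ] using hE3
  have htrace {μ' : V →ₗ[k] V →ₗ[k] V} (hμ' : ∀ a b c, B (μ' a b) c = T a b c) :=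
    trace_mul_of_pairing hBsymm hTcyc hμ' hu hTu
  refine ⟨⟨(μ, u), ⟨mul_assoc_of_pairing hBnd hTcyc hμ hTμ, one_mul_of_pairing hBnd hμ hTu,
    mul_one_of_pairing hBsymm hBnd hTcyc hμ hTu, hμ, fun a => (hu a).symm,
    fun a b => (htrace hμ a b).symm⟩, ?_⟩, ?_, ?_⟩
  · rintro ⟨μ', u'⟩ ⟨-, -, -, hμ', hu', -⟩
    refine Prod.ext (LinearMap.ext₂ fun a b => ?_) ?_
    · exact eq_of_forall_pairing_eq hBnd fun c => (hμ' a b c).trans (hμ a b c).symm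
    · exact eq_of_forall_pairing_eq hBnd fun c => (hu' c).symm.trans (hu c).symm
  · intro μ' hμ' a b
    rw [htrace hμ', htrace hμ', hBsymm]
  · intro hTsymm μ' hμ'
    exact mul_comm_of_pairing hBnd hμ' hTsymm

/-- Construction of a symmetric Frobenius algebra from correlation-function data:
given a nondegenerate symmetric pairing `B`, a trace `ε`, a cyclically invariant
three-point function `T`, a basis `v` with `B`-dual basis `v'`, and the two
compatibility equations (E2), (E3), there is a unique unital associative
multiplication `μ` with unit `u` such that `B (μ a b) c = T a b c`,
`ε a = B u a` and `B a b = ε (μ a b)`; the resulting trace is symmetric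
(`ε (μ a b) = ε (μ b a)`), and if `T` is fully symmetric then `μ` is commutative. -/
theorem frobenius_from_correlators
    {k : Type*} [Field k] {V : Type*} [AddCommGroup V] [Module k V]
    [FiniteDimensional k V]
    (B : V →ₗ[k] V →ₗ[k] k)
    (hBsymm : ∀ a b : V, B a b = B b a)
    (hBnd : ∀ a : V, (∀ b : V, B a b = 0) → a = 0)
    (ε : V →ₗ[k] k)
    (T : V →ₗ[k] V →ₗ[k] V →ₗ[k] k)
    (hTcyc : ∀ a b c : V, T a b c = T b c a)
    {ι : Type*} [Fintype ι] [DecidableEq ι]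
    (v v' : Module.Basis ι k V)
    (hdual : ∀ i j : ι, B (v i) (v' j) = if i = j then 1 else 0)
    (hE2 : ∀ a c : V, ∑ i, ε (v i) * T (v' i) a c = B a c)
    (hE3 : ∀ a b c d : V,
      ∑ i, T a b (v i) * T (v' i) c d = ∑ i, T b c (v i) * T (v' i) d a) :
    (∃! μu : (V →ₗ[k] V →ₗ[k] V) × V,
      (∀ a b c : V, μu.1 (μu.1 a b) c = μu.1 a (μu.1 b c)) ∧
      (∀ a : V, μu.1 μu.2 a = a) ∧
      (∀ a : V, μu.1 a μu.2 = a) ∧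
      (∀ a b c : V, B (μu.1 a b) c = T a b c) ∧
      (∀ a : V, ε a = B μu.2 a) ∧
      (∀ a b : V, B a b = ε (μu.1 a b))) ∧
    (∀ μ : V →ₗ[k] V →ₗ[k] V, (∀ a b c : V, B (μ a b) c = T a b c) →
      ∀ a b : V, ε (μ a b) = ε (μ b a)) ∧
    ((∀ a b c : V, T a b c = T b a c) →
      ∀ μ : V →ₗ[k] V →ₗ[k] V, (∀ a b c : V, B (μ a b) c = T a b c) →
        ∀ a b : V, μ a b = μ b a) :=
  frobenius_from_correlators_general B hBsymm hBnd ε T hTcyc v v' hdual hE2 hE3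
end
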